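/- (Hessian of the spatial Godunov–Boillat potential at an equilibrium state.) Let Ῡ = (ψ̃₀, 0, θ̃₀, 0, 0, 0) be a state with ũ = 0, Σ̃ = 0, σ̃ = 0, q̃ = 0 and θ̃₀ < 0, and write θ = −1/θ̃₀, and evaluate p̂ and its derivatives at (θ, ψ̃₀). Then the second partial derivatives of X¹ at Ῡ are: ∂²X¹/∂ψ̃∂ũ_k = p̂_ψ δ_{1k}; ∂²X¹/∂θ̃∂ũ_k = θ²p̂_θ δ_{1k}; ∂²X¹/∂ũ_m∂Σ̃_{kl} = θ δ_{k1} δ_{lm}; ∂²X¹/∂σ̃∂ũ_k = θ δ_{1k}; ∂²X¹/∂θ̃∂q̃_k = θ² δ_{1k}; and all remaining second partial derivatives of X¹ vanish at Ῡ (in particular ∂²X¹/∂ψ̃², ∂²X¹/∂ψ̃∂θ̃, ∂²X¹/∂θ̃², ∂²X¹/∂ũ_j∂ũ_k, and all second derivatives purely within or between the blocks Σ̃, σ̃, q̃, as well as those between ψ̃ and the blocks Σ̃, σ̃, q̃). -/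

import Mathlib

noncomputable section

/-- The extended thermodynamical potential
`ψ(Υ) = ψ̃ + ½θ|ũ|² + ½τ₁‖Σ̃‖² + ½τ₂σ̃² + ½τ₀|q̃|²` with `θ = -1/θ̃`. -/
def psiVal (τ0 τ1 τ2 : ℝ) (ψt : ℝ) (ut : Fin 3 → ℝ) (θt : ℝ)
    (St : Matrix (Fin 3) (Fin 3) ℝ) (σt : ℝ) (qt : Fin 3 → ℝ) : ℝ :=
  ψt + (1/2) * (-1/θt) * (∑ i, (ut i)^2) + (1/2) * τ1 * (∑ j, ∑ k, (St j k)^2)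
    + (1/2) * τ2 * σt^2 + (1/2) * τ0 * (∑ i, (qt i)^2)

/-- The temporal Godunov–Boillat potential `X⁰(Υ) = p̂(θ, ψ(Υ))/θ`, `θ = -1/θ̃`. -/
def X0 (phat : ℝ × ℝ → ℝ) (τ0 τ1 τ2 : ℝ) (ψt : ℝ) (ut : Fin 3 → ℝ) (θt : ℝ)
    (St : Matrix (Fin 3) (Fin 3) ℝ) (σt : ℝ) (qt : Fin 3 → ℝ) : ℝ :=
  phat (-1/θt, psiVal τ0 τ1 τ2 ψt ut θt St σt qt) / (-1/θt)

/-- The spatial Godunov–Boillat potential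
`X¹(Υ) = p̂(θ, ψ(Υ)) ũ₁ + θ((Σ̃ũ)₁ + σ̃ũ₁ + q̃₁)`, `θ = -1/θ̃`. -/
def X1 (phat : ℝ × ℝ → ℝ) (τ0 τ1 τ2 : ℝ) (ψt : ℝ) (ut : Fin 3 → ℝ) (θt : ℝ)
    (St : Matrix (Fin 3) (Fin 3) ℝ) (σt : ℝ) (qt : Fin 3 → ℝ) : ℝ :=
  phat (-1/θt, psiVal τ0 τ1 τ2 ψt ut θt St σt qt) * ut 0
    + (-1/θt) * ((∑ j, St 0 j * ut j) + σt * ut 0 + qt 0)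

/-- Partial derivative `p̂_ψ` of `p̂` with respect to its second slot. -/
def pPsi (phat : ℝ × ℝ → ℝ) (a b : ℝ) : ℝ := deriv (fun s => phat (a, s)) b

/-- Partial derivative `p̂_θ` of `p̂` with respect to its first slot. -/
def pTheta (phat : ℝ × ℝ → ℝ) (a b : ℝ) : ℝ := deriv (fun t => phat (t, b)) a

/-! Each entry of the Hessian is an iterated derivative along two coordinate lines. Along a line
in the direction of `ũ_k`, `Σ̃_{kl}` or `q̃_k` the potential `ψ` is quadratic in the parameter, so
`X¹` has the shape `p̂(θ, d + m t + e t²) (a + b t) + (A + B t)`, whose derivative at `0` is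
`p̂_ψ m a + p̂ b + B`. This gives the inner derivative in closed form as a function of the outer
variable, and the outer derivative is then the chain rule for `p̂` together with
`dθ/dθ̃ = θ²`. Where `ũ = 0`, `X¹ = θ q̃₁` does not involve `p̂` at all. -/

variable {phat : ℝ × ℝ → ℝ}

theorem pTheta_eq_fderiv (hp : Differentiable ℝ phat) (a b : ℝ) :
    pTheta phat a b = fderiv ℝ phat (a, b) (1, 0) :=
  ((hp _).hasFDerivAt.comp_hasDerivAt a ((hasDerivAt_id' a).prodMk (hasDerivAt_const a b))).deriv

theorem pPsi_eq_fderiv (hp : Differentiable ℝ phat) (a b : ℝ) :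
    pPsi phat a b = fderiv ℝ phat (a, b) (0, 1) :=
  ((hp _).hasFDerivAt.comp_hasDerivAt b ((hasDerivAt_const b a).prodMk (hasDerivAt_id' b))).deriv

theorem hasDerivAt_phat_comp (hp : Differentiable ℝ phat) {f g : ℝ → ℝ} {f' g' x : ℝ}
    (hf : HasDerivAt f f' x) (hg : HasDerivAt g g' x) :
    HasDerivAt (fun t => phat (f t, g t))
      (pTheta phat (f x) (g x) * f' + pPsi phat (f x) (g x) * g') x := by
  refine ((hp _).hasFDerivAt.comp_hasDerivAt x (hf.prodMk hg)).congr_deriv ?_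
  have hsplit : ((f', g') : ℝ × ℝ) = f' • ((1 : ℝ), (0 : ℝ)) + g' • ((0 : ℝ), (1 : ℝ)) := by
    simp
  rw [pTheta_eq_fderiv hp, pPsi_eq_fderiv hp, hsplit, map_add, map_smul, map_smul, smul_eq_mul,
    smul_eq_mul]
  ring

theorem differentiable_pPsi (hp : ContDiff ℝ 2 phat) (a : ℝ) : Differentiable ℝ (pPsi phat a) := by
  have hd : Differentiable ℝ phat := hp.differentiable (by norm_num)
  rw [show pPsi phat a = fun b => fderiv ℝ phat (a, b) (0, 1) from funext (pPsi_eq_fderiv hd a)]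
  exact (((hp.fderiv_right (m := 1) (by norm_num)).differentiable one_ne_zero).comp
    ((differentiable_const a).prodMk differentiable_id)).clm_apply (differentiable_const _)

theorem hasDerivAt_neg_one_div {θ : ℝ} (hθ : θ ≠ 0) :
    HasDerivAt (fun s : ℝ => -1/s) ((-1/θ) ^ 2) θ := by
  refine ((hasDerivAt_inv hθ).fun_neg).congr_deriv ?_ |>.congr_of_eventuallyEq ?_
  · field_simp
  · exact Filter.Eventually.of_forall fun s => by ring

theorem hasDerivAt_phat_even (hp : Differentiable ℝ phat) (c d e : ℝ) :
    HasDerivAt (fun s => phat (c, d + e * s ^ 2)) 0 0 :=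
  (hasDerivAt_phat_comp hp (hasDerivAt_const 0 c)
    ((((hasDerivAt_id' 0).fun_pow 2).const_mul e).const_add d)).congr_deriv (by simp)

theorem hasDerivAt_quadratic (d m e : ℝ) :
    HasDerivAt (fun t : ℝ => d + m * t + e * t ^ 2) m 0 :=
  ((((hasDerivAt_id' 0).const_mul m).const_add d).fun_add
    (((hasDerivAt_id' 0).fun_pow 2).const_mul e)).congr_deriv (by norm_num)

theorem hasDerivAt_phat_quadratic_mul_affine_add_affine (hp : Differentiable ℝ phat)
    (c d m e a b A B : ℝ) :
    HasDerivAt (fun t => phat (c, d + m * t + e * t ^ 2) * (a + b * t) + (A + B * t))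
      (pPsi phat c d * m * a + phat (c, d) * b + B) 0 := by
  have haffine : ∀ a b : ℝ, HasDerivAt (fun t : ℝ => a + b * t) b 0 := fun a b =>
    (((hasDerivAt_id' 0).const_mul b).const_add a).congr_deriv (mul_one b)
  refine (((hasDerivAt_phat_comp hp (hasDerivAt_const 0 c) (hasDerivAt_quadratic d m e)).fun_mul
    (haffine a b)).fun_add (haffine A B)).congr_deriv ?_
  norm_num

variable (τ0 τ1 τ2 : ℝ)

theorem psiVal_add_single_u (ψ : ℝ) (u : Fin 3 → ℝ) (θ : ℝ) (S : Matrix (Fin 3) (Fin 3) ℝ)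
    (σ : ℝ) (q : Fin 3 → ℝ) (k : Fin 3) (t : ℝ) :
    psiVal τ0 τ1 τ2 ψ (u + Pi.single k t) θ S σ q
      = psiVal τ0 τ1 τ2 ψ u θ S σ q + (-1/θ) * u k * t + (1/2) * (-1/θ) * t ^ 2 := by
  fin_cases k <;> simp [psiVal, Fin.sum_univ_three] <;> ring

theorem psiVal_add_single_Sigma (ψ : ℝ) (u : Fin 3 → ℝ) (θ : ℝ) (S : Matrix (Fin 3) (Fin 3) ℝ)
    (σ : ℝ) (q : Fin 3 → ℝ) (k l : Fin 3) (t : ℝ) :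
    psiVal τ0 τ1 τ2 ψ u θ (S + Matrix.single k l t) σ q
      = psiVal τ0 τ1 τ2 ψ u θ S σ q + τ1 * S k l * t + (1/2) * τ1 * t ^ 2 := by
  fin_cases k <;> fin_cases l <;> simp [psiVal, Fin.sum_univ_three, Matrix.single] <;> ring

theorem psiVal_add_single_q (ψ : ℝ) (u : Fin 3 → ℝ) (θ : ℝ) (S : Matrix (Fin 3) (Fin 3) ℝ)
    (σ : ℝ) (q : Fin 3 → ℝ) (k : Fin 3) (t : ℝ) :
    psiVal τ0 τ1 τ2 ψ u θ S σ (q + Pi.single k t)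
      = psiVal τ0 τ1 τ2 ψ u θ S σ q + τ0 * q k * t + (1/2) * τ0 * t ^ 2 := by
  fin_cases k <;> simp [psiVal, Fin.sum_univ_three] <;> ring

theorem X1_zero_u (ψ θ : ℝ) (S : Matrix (Fin 3) (Fin 3) ℝ) (σ : ℝ) (q : Fin 3 → ℝ) :
    X1 phat τ0 τ1 τ2 ψ 0 θ S σ q = -1/θ * q 0 := by
  simp [X1]

theorem hasDerivAt_X1_add_single_u (hp : Differentiable ℝ phat) (ψ : ℝ) (u : Fin 3 → ℝ) (θ : ℝ)
    (S : Matrix (Fin 3) (Fin 3) ℝ) (σ : ℝ) (q : Fin 3 → ℝ) (k : Fin 3) :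
    HasDerivAt (fun t => X1 phat τ0 τ1 τ2 ψ (u + Pi.single k t) θ S σ q)
      (pPsi phat (-1/θ) (psiVal τ0 τ1 τ2 ψ u θ S σ q) * (-1/θ * u k) * u 0
        + phat (-1/θ, psiVal τ0 τ1 τ2 ψ u θ S σ q) * (if (0 : Fin 3) = k then 1 else 0)
        + -1/θ * (S 0 k + σ * (if (0 : Fin 3) = k then 1 else 0))) 0 := by
  convert hasDerivAt_phat_quadratic_mul_affine_add_affine hp (-1/θ) (psiVal τ0 τ1 τ2 ψ u θ S σ q)
    (-1/θ * u k) (1/2 * (-1/θ)) (u 0) (if (0 : Fin 3) = k then 1 else 0)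
    (-1/θ * (∑ j, S 0 j * u j + σ * u 0 + q 0))
    (-1/θ * (S 0 k + σ * (if (0 : Fin 3) = k then 1 else 0))) using 1
  funext t
  rw [X1, psiVal_add_single_u]
  fin_cases k <;> simp [Fin.sum_univ_three] <;> ring

theorem hasDerivAt_X1_add_single_Sigma (hp : Differentiable ℝ phat) (ψ : ℝ) (u : Fin 3 → ℝ)
    (θ : ℝ) (S : Matrix (Fin 3) (Fin 3) ℝ) (σ : ℝ) (q : Fin 3 → ℝ) (k l : Fin 3) :
    HasDerivAt (fun t => X1 phat τ0 τ1 τ2 ψ u θ (S + Matrix.single k l t) σ q)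
      (pPsi phat (-1/θ) (psiVal τ0 τ1 τ2 ψ u θ S σ q) * (τ1 * S k l) * u 0
        + -1/θ * (if k = 0 then u l else 0)) 0 := by
  convert hasDerivAt_phat_quadratic_mul_affine_add_affine hp (-1/θ) (psiVal τ0 τ1 τ2 ψ u θ S σ q)
    (τ1 * S k l) (1/2 * τ1) (u 0) 0
    (-1/θ * (∑ j, S 0 j * u j + σ * u 0 + q 0)) (-1/θ * (if k = 0 then u l else 0)) using 1
  · funext t
    rw [X1, psiVal_add_single_Sigma]
    fin_cases k <;> fin_cases l <;> simp [Fin.sum_univ_three, Matrix.single] <;> ring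
  · ring

theorem hasDerivAt_X1_add_single_q (hp : Differentiable ℝ phat) (ψ : ℝ) (u : Fin 3 → ℝ) (θ : ℝ)
    (S : Matrix (Fin 3) (Fin 3) ℝ) (σ : ℝ) (q : Fin 3 → ℝ) (k : Fin 3) :
    HasDerivAt (fun t => X1 phat τ0 τ1 τ2 ψ u θ S σ (q + Pi.single k t))
      (pPsi phat (-1/θ) (psiVal τ0 τ1 τ2 ψ u θ S σ q) * (τ0 * q k) * u 0
        + -1/θ * (if (0 : Fin 3) = k then 1 else 0)) 0 := by
  convert hasDerivAt_phat_quadratic_mul_affine_add_affine hp (-1/θ) (psiVal τ0 τ1 τ2 ψ u θ S σ q)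
    (τ0 * q k) (1/2 * τ0) (u 0) 0
    (-1/θ * (∑ j, S 0 j * u j + σ * u 0 + q 0)) (-1/θ * (if (0 : Fin 3) = k then 1 else 0))
    using 1
  · funext t
    rw [X1, psiVal_add_single_q]
    fin_cases k <;> simp [mul_add, add_assoc]
  · ring

theorem X1_hessian_psi_u (hp : Differentiable ℝ phat) (ψ0 θ0 : ℝ) (k : Fin 3) :
    deriv (fun s => deriv (fun t => X1 phat τ0 τ1 τ2 s (Pi.single k t) θ0 0 0 0) 0) ψ0
      = pPsi phat (-1/θ0) ψ0 * (if (0 : Fin 3) = k then 1 else 0) := by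
  have inner : ∀ s, deriv (fun t => X1 phat τ0 τ1 τ2 s (Pi.single k t) θ0 0 0 0) 0
      = phat (-1/θ0, s) * (if (0 : Fin 3) = k then 1 else 0) := fun s => by
    simpa [psiVal] using (hasDerivAt_X1_add_single_u τ0 τ1 τ2 hp s 0 θ0 0 0 0 k).deriv
  simp_rw [inner]
  exact ((hasDerivAt_phat_comp hp (hasDerivAt_const ψ0 _) (hasDerivAt_id' ψ0)).mul_const
    _).deriv.trans (by simp)

theorem X1_hessian_theta_u (hp : Differentiable ℝ phat) (ψ0 : ℝ) {θ0 : ℝ} (hθ0 : θ0 ≠ 0)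
    (k : Fin 3) :
    deriv (fun s => deriv (fun t => X1 phat τ0 τ1 τ2 ψ0 (Pi.single k t) s 0 0 0) 0) θ0
      = (-1/θ0)^2 * pTheta phat (-1/θ0) ψ0 * (if (0 : Fin 3) = k then 1 else 0) := by
  have inner : ∀ s, deriv (fun t => X1 phat τ0 τ1 τ2 ψ0 (Pi.single k t) s 0 0 0) 0
      = phat (-1/s, ψ0) * (if (0 : Fin 3) = k then 1 else 0) := fun s => by
    simpa [psiVal] using (hasDerivAt_X1_add_single_u τ0 τ1 τ2 hp ψ0 0 s 0 0 0 k).deriv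
  simp_rw [inner]
  exact ((hasDerivAt_phat_comp hp (hasDerivAt_neg_one_div hθ0) (hasDerivAt_const θ0 ψ0)).mul_const
    _).deriv.trans (by ring)

theorem X1_hessian_u_Sigma (hp : Differentiable ℝ phat) (ψ0 θ0 : ℝ) (m k l : Fin 3) :
    deriv (fun s => deriv (fun t => X1 phat τ0 τ1 τ2 ψ0
        (Pi.single m s) θ0 (Matrix.single k l t) 0 0) 0) 0
      = (-1/θ0) * (if k = (0 : Fin 3) then 1 else 0) * (if l = m then 1 else 0) := by
  have inner : ∀ s, deriv (fun t => X1 phat τ0 τ1 τ2 ψ0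
        (Pi.single m s) θ0 (Matrix.single k l t) 0 0) 0
      = (-1/θ0) * (if k = (0 : Fin 3) then 1 else 0) * (if l = m then 1 else 0) * s := fun s => by
    have h := (hasDerivAt_X1_add_single_Sigma τ0 τ1 τ2 hp ψ0 (Pi.single m s) θ0 0 0 0 k l).deriv
    simp only [zero_add] at h
    rw [h]
    split_ifs <;> simp_all [Pi.single_apply]
  simp_rw [inner]
  split_ifs <;> simp

theorem X1_hessian_sigma_u (hp : Differentiable ℝ phat) (ψ0 θ0 : ℝ) (k : Fin 3) :
    deriv (fun s => deriv (fun t => X1 phat τ0 τ1 τ2 ψ0 (Pi.single k t) θ0 0 s 0) 0) 0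
      = (-1/θ0) * (if (0 : Fin 3) = k then 1 else 0) := by
  have inner : ∀ s, deriv (fun t => X1 phat τ0 τ1 τ2 ψ0 (Pi.single k t) θ0 0 s 0) 0
      = phat (-1/θ0, ψ0 + 1/2 * τ2 * s ^ 2) * (if (0 : Fin 3) = k then 1 else 0)
        + -1/θ0 * (s * (if (0 : Fin 3) = k then 1 else 0)) := fun s => by
    simpa [psiVal] using (hasDerivAt_X1_add_single_u τ0 τ1 τ2 hp ψ0 0 θ0 0 s 0 k).deriv
  simp_rw [inner]
  exact (((hasDerivAt_phat_even hp _ _ _).mul_const _).fun_add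
    (((hasDerivAt_id' 0).mul_const _).const_mul _)).deriv.trans (by simp)

theorem X1_hessian_theta_q (hp : Differentiable ℝ phat) (ψ0 : ℝ) {θ0 : ℝ} (hθ0 : θ0 ≠ 0)
    (k : Fin 3) :
    deriv (fun s => deriv (fun t => X1 phat τ0 τ1 τ2 ψ0 0 s 0 0 (Pi.single k t)) 0) θ0
      = (-1/θ0)^2 * (if (0 : Fin 3) = k then 1 else 0) := by
  have inner : ∀ s, deriv (fun t => X1 phat τ0 τ1 τ2 ψ0 0 s 0 0 (Pi.single k t)) 0
      = -1/s * (if (0 : Fin 3) = k then 1 else 0) := fun s => by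
    simpa using (hasDerivAt_X1_add_single_q τ0 τ1 τ2 hp ψ0 0 s 0 0 0 k).deriv
  simp_rw [inner]
  exact ((hasDerivAt_neg_one_div hθ0).mul_const _).deriv

theorem X1_hessian_u_u (hp : ContDiff ℝ 2 phat) (ψ0 θ0 : ℝ) (j k : Fin 3) :
    deriv (fun s => deriv (fun t => X1 phat τ0 τ1 τ2 ψ0
        (Pi.single j s + Pi.single k t) θ0 0 0 0) 0) 0 = 0 := by
  have hd : Differentiable ℝ phat := hp.differentiable (by norm_num)
  have inner : ∀ s, deriv (fun t => X1 phat τ0 τ1 τ2 ψ0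
        (Pi.single j s + Pi.single k t) θ0 0 0 0) 0
      = pPsi phat (-1/θ0) (ψ0 + 1/2 * (-1/θ0) * s ^ 2)
          * (-1/θ0 * (if j = k then 1 else 0) * (if (0 : Fin 3) = j then 1 else 0)) * s ^ 2
        + phat (-1/θ0, ψ0 + 1/2 * (-1/θ0) * s ^ 2) * (if (0 : Fin 3) = k then 1 else 0) :=
      fun s => by
    have hψ : psiVal τ0 τ1 τ2 ψ0 (Pi.single j s) θ0 0 0 0 = ψ0 + 1/2 * (-1/θ0) * s ^ 2 := by
      simpa [psiVal] using psiVal_add_single_u τ0 τ1 τ2 ψ0 0 θ0 0 0 0 j s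
    rw [(hasDerivAt_X1_add_single_u τ0 τ1 τ2 hd ψ0 (Pi.single j s) θ0 0 0 0 k).deriv, hψ]
    fin_cases j <;> fin_cases k <;> simp [sq, mul_assoc]
  simp_rw [inner]
  -- An `s²` multiple of a differentiable function plus an even one: this is where `C²` enters.
  have hF : DifferentiableAt ℝ (fun s => pPsi phat (-1/θ0) (ψ0 + 1/2 * (-1/θ0) * s ^ 2)) 0 :=
    (differentiable_pPsi hp _).differentiableAt.comp 0 (by fun_prop)
  exact (((hF.hasDerivAt.mul_const _).fun_mul ((hasDerivAt_id' 0).fun_pow 2)).fun_add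
    ((hasDerivAt_phat_even hd _ _ _).mul_const _)).deriv.trans (by simp)

theorem X1_hessian_u_q (hp : Differentiable ℝ phat) (ψ0 θ0 : ℝ) (j k : Fin 3) :
    deriv (fun s => deriv (fun t => X1 phat τ0 τ1 τ2 ψ0
        (Pi.single j s) θ0 0 0 (Pi.single k t)) 0) 0 = 0 := by
  have inner : ∀ s, deriv (fun t => X1 phat τ0 τ1 τ2 ψ0 (Pi.single j s) θ0 0 0 (Pi.single k t)) 0
      = -1/θ0 * (if (0 : Fin 3) = k then 1 else 0) := fun s => by
    simpa using (hasDerivAt_X1_add_single_q τ0 τ1 τ2 hp ψ0 (Pi.single j s) θ0 0 0 0 k).deriv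
  simp_rw [inner]
  exact deriv_const _ _

theorem X1_hessian_at_equilibrium_general
    (phat : ℝ × ℝ → ℝ) (hp : ContDiff ℝ 2 phat)
    (τ0 τ1 τ2 : ℝ)
    (ψ0 θ0 : ℝ) (hθ0 : θ0 < 0) :
    -- ∂²X¹/∂ψ̃∂ũ_k = p̂_ψ δ_{1k}
    (∀ k : Fin 3,
      deriv (fun s : ℝ => deriv (fun t : ℝ => X1 phat τ0 τ1 τ2 s
          (Pi.single k t) θ0 0 0 0) 0) ψ0
        = pPsi phat (-1/θ0) ψ0 * (if (0 : Fin 3) = k then 1 else 0))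
    -- ∂²X¹/∂θ̃∂ũ_k = θ² p̂_θ δ_{1k}
    ∧ (∀ k : Fin 3,
      deriv (fun s : ℝ => deriv (fun t : ℝ => X1 phat τ0 τ1 τ2 ψ0
          (Pi.single k t) s 0 0 0) 0) θ0
        = (-1/θ0)^2 * pTheta phat (-1/θ0) ψ0 * (if (0 : Fin 3) = k then 1 else 0))
    -- ∂²X¹/∂ũ_m∂Σ̃_{kl} = θ δ_{k1} δ_{lm}
    ∧ (∀ m k l : Fin 3,
      deriv (fun s : ℝ => deriv (fun t : ℝ => X1 phat τ0 τ1 τ2 ψ0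
          (Pi.single m s) θ0 (Matrix.single k l t) 0 0) 0) 0
        = (-1/θ0) * (if k = (0 : Fin 3) then 1 else 0) * (if l = m then 1 else 0))
    -- ∂²X¹/∂σ̃∂ũ_k = θ δ_{1k}
    ∧ (∀ k : Fin 3,
      deriv (fun s : ℝ => deriv (fun t : ℝ => X1 phat τ0 τ1 τ2 ψ0
          (Pi.single k t) θ0 0 s 0) 0) 0
        = (-1/θ0) * (if (0 : Fin 3) = k then 1 else 0))
    -- ∂²X¹/∂θ̃∂q̃_k = θ² δ_{1k}
    ∧ (∀ k : Fin 3,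
      deriv (fun s : ℝ => deriv (fun t : ℝ => X1 phat τ0 τ1 τ2 ψ0 0 s 0 0
          (Pi.single k t)) 0) θ0
        = (-1/θ0)^2 * (if (0 : Fin 3) = k then 1 else 0))
    -- ∂²X¹/∂ψ̃² = 0
    ∧ deriv (fun s : ℝ => deriv (fun t : ℝ => X1 phat τ0 τ1 τ2 t 0 θ0 0 0 0) s) ψ0 = 0
    -- ∂²X¹/∂ψ̃∂θ̃ = 0
    ∧ deriv (fun s : ℝ => deriv (fun t : ℝ => X1 phat τ0 τ1 τ2 t 0 s 0 0 0) ψ0) θ0 = 0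
    -- ∂²X¹/∂θ̃² = 0
    ∧ deriv (fun s : ℝ => deriv (fun t : ℝ => X1 phat τ0 τ1 τ2 ψ0 0 t 0 0 0) s) θ0 = 0
    -- ∂²X¹/∂ũ_j∂ũ_k = 0
    ∧ (∀ j k : Fin 3,
      deriv (fun s : ℝ => deriv (fun t : ℝ => X1 phat τ0 τ1 τ2 ψ0
          (Pi.single j s + Pi.single k t) θ0 0 0 0) 0) 0 = 0)
    -- ∂²X¹/∂Σ̃_{jk}∂Σ̃_{lm} = 0
    ∧ (∀ j k l m : Fin 3,
      deriv (fun s : ℝ => deriv (fun t : ℝ => X1 phat τ0 τ1 τ2 ψ0 0 θ0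
          (Matrix.single j k s + Matrix.single l m t) 0 0) 0) 0 = 0)
    -- ∂²X¹/∂σ̃² = 0
    ∧ deriv (fun s : ℝ => deriv (fun t : ℝ => X1 phat τ0 τ1 τ2 ψ0 0 θ0 0 t 0) s) 0 = 0
    -- ∂²X¹/∂q̃_j∂q̃_k = 0
    ∧ (∀ j k : Fin 3,
      deriv (fun s : ℝ => deriv (fun t : ℝ => X1 phat τ0 τ1 τ2 ψ0 0 θ0 0 0
          (Pi.single j s + Pi.single k t)) 0) 0 = 0)
    -- mixed Σ̃–σ̃ = 0
    ∧ (∀ k l : Fin 3,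
      deriv (fun s : ℝ => deriv (fun t : ℝ => X1 phat τ0 τ1 τ2 ψ0 0 θ0
          (Matrix.single k l s) t 0) 0) 0 = 0)
    -- mixed Σ̃–q̃ = 0
    ∧ (∀ k l m : Fin 3,
      deriv (fun s : ℝ => deriv (fun t : ℝ => X1 phat τ0 τ1 τ2 ψ0 0 θ0
          (Matrix.single k l s) 0 (Pi.single m t)) 0) 0 = 0)
    -- mixed σ̃–q̃ = 0
    ∧ (∀ k : Fin 3,
      deriv (fun s : ℝ => deriv (fun t : ℝ => X1 phat τ0 τ1 τ2 ψ0 0 θ0 0 s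
          (Pi.single k t)) 0) 0 = 0)
    -- mixed ψ̃–Σ̃ = 0
    ∧ (∀ k l : Fin 3,
      deriv (fun s : ℝ => deriv (fun t : ℝ => X1 phat τ0 τ1 τ2 s 0 θ0
          (Matrix.single k l t) 0 0) 0) ψ0 = 0)
    -- mixed ψ̃–σ̃ = 0
    ∧ deriv (fun s : ℝ => deriv (fun t : ℝ => X1 phat τ0 τ1 τ2 s 0 θ0 0 t 0) 0) ψ0 = 0
    -- mixed ψ̃–q̃ = 0
    ∧ (∀ k : Fin 3,
      deriv (fun s : ℝ => deriv (fun t : ℝ => X1 phat τ0 τ1 τ2 s 0 θ0 0 0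
          (Pi.single k t)) 0) ψ0 = 0)
    -- mixed θ̃–Σ̃ = 0
    ∧ (∀ k l : Fin 3,
      deriv (fun s : ℝ => deriv (fun t : ℝ => X1 phat τ0 τ1 τ2 ψ0 0 s
          (Matrix.single k l t) 0 0) 0) θ0 = 0)
    -- mixed θ̃–σ̃ = 0
    ∧ deriv (fun s : ℝ => deriv (fun t : ℝ => X1 phat τ0 τ1 τ2 ψ0 0 s 0 t 0) 0) θ0 = 0
    -- mixed ũ–q̃ = 0
    ∧ (∀ j k : Fin 3,
      deriv (fun s : ℝ => deriv (fun t : ℝ => X1 phat τ0 τ1 τ2 ψ0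
          (Pi.single j s) θ0 0 0 (Pi.single k t)) 0) 0 = 0) := by
  have hd : Differentiable ℝ phat := hp.differentiable (by norm_num)
  refine ⟨X1_hessian_psi_u τ0 τ1 τ2 hd ψ0 θ0, X1_hessian_theta_u τ0 τ1 τ2 hd ψ0 hθ0.ne,
    X1_hessian_u_Sigma τ0 τ1 τ2 hd ψ0 θ0, X1_hessian_sigma_u τ0 τ1 τ2 hd ψ0 θ0,
    X1_hessian_theta_q τ0 τ1 τ2 hd ψ0 hθ0.ne, ?_, ?_, ?_, X1_hessian_u_u τ0 τ1 τ2 hp ψ0 θ0,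
    ?_, ?_, ?_, ?_, ?_, ?_, ?_, ?_, ?_, ?_, ?_, X1_hessian_u_q τ0 τ1 τ2 hd ψ0 θ0⟩ <;>
  simp [X1_zero_u]

/-- Hessian of the spatial Godunov–Boillat potential `X¹` at an equilibrium
state `Ῡ = (ψ̃₀, 0, θ̃₀, 0, 0, 0)` with `θ̃₀ < 0`, `θ = -1/θ̃₀`:
`∂²X¹/∂ψ̃∂ũ_k = p̂_ψ δ_{1k}`, `∂²X¹/∂θ̃∂ũ_k = θ²p̂_θ δ_{1k}`,
`∂²X¹/∂ũ_m∂Σ̃_{kl} = θ δ_{k1} δ_{lm}`, `∂²X¹/∂σ̃∂ũ_k = θ δ_{1k}`,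
`∂²X¹/∂θ̃∂q̃_k = θ² δ_{1k}`, and all remaining second partial derivatives of
`X¹` vanish at `Ῡ`. -/
theorem X1_hessian_at_equilibrium
    (phat : ℝ × ℝ → ℝ) (hp : ContDiff ℝ 2 phat)
    (τ0 τ1 τ2 : ℝ) (hτ0 : 0 < τ0) (hτ1 : 0 < τ1) (hτ2 : 0 < τ2)
    (ψ0 θ0 : ℝ) (hθ0 : θ0 < 0) :
    -- ∂²X¹/∂ψ̃∂ũ_k = p̂_ψ δ_{1k}
    (∀ k : Fin 3,
      deriv (fun s : ℝ => deriv (fun t : ℝ => X1 phat τ0 τ1 τ2 s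
          (Pi.single k t) θ0 0 0 0) 0) ψ0
        = pPsi phat (-1/θ0) ψ0 * (if (0 : Fin 3) = k then 1 else 0))
    -- ∂²X¹/∂θ̃∂ũ_k = θ² p̂_θ δ_{1k}
    ∧ (∀ k : Fin 3,
      deriv (fun s : ℝ => deriv (fun t : ℝ => X1 phat τ0 τ1 τ2 ψ0
          (Pi.single k t) s 0 0 0) 0) θ0
        = (-1/θ0)^2 * pTheta phat (-1/θ0) ψ0 * (if (0 : Fin 3) = k then 1 else 0))
    -- ∂²X¹/∂ũ_m∂Σ̃_{kl} = θ δ_{k1} δ_{lm}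
    ∧ (∀ m k l : Fin 3,
      deriv (fun s : ℝ => deriv (fun t : ℝ => X1 phat τ0 τ1 τ2 ψ0
          (Pi.single m s) θ0 (Matrix.single k l t) 0 0) 0) 0
        = (-1/θ0) * (if k = (0 : Fin 3) then 1 else 0) * (if l = m then 1 else 0))
    -- ∂²X¹/∂σ̃∂ũ_k = θ δ_{1k}
    ∧ (∀ k : Fin 3,
      deriv (fun s : ℝ => deriv (fun t : ℝ => X1 phat τ0 τ1 τ2 ψ0
          (Pi.single k t) θ0 0 s 0) 0) 0
        = (-1/θ0) * (if (0 : Fin 3) = k then 1 else 0))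
    -- ∂²X¹/∂θ̃∂q̃_k = θ² δ_{1k}
    ∧ (∀ k : Fin 3,
      deriv (fun s : ℝ => deriv (fun t : ℝ => X1 phat τ0 τ1 τ2 ψ0 0 s 0 0
          (Pi.single k t)) 0) θ0
        = (-1/θ0)^2 * (if (0 : Fin 3) = k then 1 else 0))
    -- ∂²X¹/∂ψ̃² = 0
    ∧ deriv (fun s : ℝ => deriv (fun t : ℝ => X1 phat τ0 τ1 τ2 t 0 θ0 0 0 0) s) ψ0 = 0
    -- ∂²X¹/∂ψ̃∂θ̃ = 0
    ∧ deriv (fun s : ℝ => deriv (fun t : ℝ => X1 phat τ0 τ1 τ2 t 0 s 0 0 0) ψ0) θ0 = 0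
    -- ∂²X¹/∂θ̃² = 0
    ∧ deriv (fun s : ℝ => deriv (fun t : ℝ => X1 phat τ0 τ1 τ2 ψ0 0 t 0 0 0) s) θ0 = 0
    -- ∂²X¹/∂ũ_j∂ũ_k = 0
    ∧ (∀ j k : Fin 3,
      deriv (fun s : ℝ => deriv (fun t : ℝ => X1 phat τ0 τ1 τ2 ψ0
          (Pi.single j s + Pi.single k t) θ0 0 0 0) 0) 0 = 0)
    -- ∂²X¹/∂Σ̃_{jk}∂Σ̃_{lm} = 0
    ∧ (∀ j k l m : Fin 3,
      deriv (fun s : ℝ => deriv (fun t : ℝ => X1 phat τ0 τ1 τ2 ψ0 0 θ0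
          (Matrix.single j k s + Matrix.single l m t) 0 0) 0) 0 = 0)
    -- ∂²X¹/∂σ̃² = 0
    ∧ deriv (fun s : ℝ => deriv (fun t : ℝ => X1 phat τ0 τ1 τ2 ψ0 0 θ0 0 t 0) s) 0 = 0
    -- ∂²X¹/∂q̃_j∂q̃_k = 0
    ∧ (∀ j k : Fin 3,
      deriv (fun s : ℝ => deriv (fun t : ℝ => X1 phat τ0 τ1 τ2 ψ0 0 θ0 0 0
          (Pi.single j s + Pi.single k t)) 0) 0 = 0)
    -- mixed Σ̃–σ̃ = 0
    ∧ (∀ k l : Fin 3,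
      deriv (fun s : ℝ => deriv (fun t : ℝ => X1 phat τ0 τ1 τ2 ψ0 0 θ0
          (Matrix.single k l s) t 0) 0) 0 = 0)
    -- mixed Σ̃–q̃ = 0
    ∧ (∀ k l m : Fin 3,
      deriv (fun s : ℝ => deriv (fun t : ℝ => X1 phat τ0 τ1 τ2 ψ0 0 θ0
          (Matrix.single k l s) 0 (Pi.single m t)) 0) 0 = 0)
    -- mixed σ̃–q̃ = 0
    ∧ (∀ k : Fin 3,
      deriv (fun s : ℝ => deriv (fun t : ℝ => X1 phat τ0 τ1 τ2 ψ0 0 θ0 0 s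
          (Pi.single k t)) 0) 0 = 0)
    -- mixed ψ̃–Σ̃ = 0
    ∧ (∀ k l : Fin 3,
      deriv (fun s : ℝ => deriv (fun t : ℝ => X1 phat τ0 τ1 τ2 s 0 θ0
          (Matrix.single k l t) 0 0) 0) ψ0 = 0)
    -- mixed ψ̃–σ̃ = 0
    ∧ deriv (fun s : ℝ => deriv (fun t : ℝ => X1 phat τ0 τ1 τ2 s 0 θ0 0 t 0) 0) ψ0 = 0
    -- mixed ψ̃–q̃ = 0
    ∧ (∀ k : Fin 3,
      deriv (fun s : ℝ => deriv (fun t : ℝ => X1 phat τ0 τ1 τ2 s 0 θ0 0 0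
          (Pi.single k t)) 0) ψ0 = 0)
    -- mixed θ̃–Σ̃ = 0
    ∧ (∀ k l : Fin 3,
      deriv (fun s : ℝ => deriv (fun t : ℝ => X1 phat τ0 τ1 τ2 ψ0 0 s
          (Matrix.single k l t) 0 0) 0) θ0 = 0)
    -- mixed θ̃–σ̃ = 0
    ∧ deriv (fun s : ℝ => deriv (fun t : ℝ => X1 phat τ0 τ1 τ2 ψ0 0 s 0 t 0) 0) θ0 = 0
    -- mixed ũ–q̃ = 0
    ∧ (∀ j k : Fin 3,
      deriv (fun s : ℝ => deriv (fun t : ℝ => X1 phat τ0 τ1 τ2 ψ0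
          (Pi.single j s) θ0 0 0 (Pi.single k t)) 0) 0 = 0) :=
  X1_hessian_at_equilibrium_general phat hp τ0 τ1 τ2 ψ0 θ0 hθ0

end
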